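/- arXiv:2306.00737 — 3 statements merged into one kernel-verified Lean document; each statement's English description precedes it below -/
import Mathlib

section
/- Let I ⊆ R = C[x_1,...,x_N] be a monomial ideal with minimal monomial generators g_1,...,g_s, let x_i be a variable appearing with exponent at least 2 in some generator, and let I' ⊆ R' = C[x_1,...,x_N,y] be the partial polarization of I with respect to x_i. Then y - x_i is not a zero-divisor on R'/I'. -/
open MvPolynomial

/-- Embedding of exponent vectors along `some : Fin N → Option (Fin N)`
(where `none` plays the role of the new variable `y`). -/
noncomputable def embedExp {N : ℕ} (a : Fin N →₀ ℕ) : Option (Fin N) →₀ ℕ :=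
  Finsupp.mapDomain some a

/-- The exponent of a partially polarized generator: if `x_i` occurs with exponent `≥ 2`
in `x^a`, replace one factor of `x_i` by the new variable `y` (indexed by `none`). -/
noncomputable def partialPolarGen {N : ℕ} (i : Fin N) (a : Fin N →₀ ℕ) :
    Option (Fin N) →₀ ℕ :=
  if 2 ≤ a i then embedExp (a - Finsupp.single i 1) + Finsupp.single none 1 else embedExp a

lemma embedExp_some {N : ℕ} (a : Fin N →₀ ℕ) (m : Fin N) :
    embedExp a (some m) = a m :=
  Finsupp.mapDomain_apply (Option.some_injective _) a m

lemma embedExp_none {N : ℕ} (a : Fin N →₀ ℕ) :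
    embedExp a none = 0 :=
  Finsupp.mapDomain_notin_range a none (by simp)

/-- If an embedded exponent is dominated by `d + e_y`, it is dominated by `d`. -/
lemma embedExp_le_of_le_add_none {N : ℕ} (a : Fin N →₀ ℕ) (d : Option (Fin N) →₀ ℕ)
    (h : embedExp a ≤ d + Finsupp.single none 1) : embedExp a ≤ d := by
  rw [Finsupp.le_def] at h ⊢
  intro o
  match o with
  | none => simp [embedExp_none]
  | some m =>
    have := h (some m)
    simpa [Finsupp.single_apply] using this

/-- Core combinatorial lemma: a polynomial all of whose monomials are "standard"
(not divisible by a polarized generator), but such that all monomials of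
`(y - x_i) * f` are in the polarized ideal, must vanish. -/
lemma core_lemma {N s : ℕ} (i : Fin N) (g : Fin s → (Fin N →₀ ℕ))
    (f : MvPolynomial (Option (Fin N)) ℂ)
    (hstd : ∀ d ∈ f.support, ¬ ∃ j, partialPolarGen i (g j) ≤ d)
    (hmul : ∀ d ∈ ((MvPolynomial.X none - MvPolynomial.X (some i)) * f).support,
      ∃ j, partialPolarGen i (g j) ≤ d) : f = 0 := by
  classical
  by_contra hf
  have hne : f.support.Nonempty := by
    rw [Finset.nonempty_iff_ne_empty]
    intro h
    exact hf (MvPolynomial.support_eq_empty.mp h)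
  -- generic coefficient computation at `d + single none 1`
  have hcoeff : ∀ d : Option (Fin N) →₀ ℕ,
      MvPolynomial.coeff (d + Finsupp.single none 1 - Finsupp.single (some i) 1) f = 0 →
      MvPolynomial.coeff (d + Finsupp.single none 1)
        ((MvPolynomial.X none - MvPolynomial.X (some i)) * f) =
      MvPolynomial.coeff d f := by
    intro d hz
    rw [sub_mul, MvPolynomial.coeff_sub, MvPolynomial.coeff_X_mul', MvPolynomial.coeff_X_mul']
    have h1 : none ∈ (d + Finsupp.single none 1).support := by
      simp [Finsupp.mem_support_iff]
    rw [if_pos h1, add_tsub_cancel_right]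
    split_ifs with h'
    · rw [hz, sub_zero]
    · rw [sub_zero]
  -- Step A: every exponent in the support of `f` has `none`-coordinate 0.
  have hnone : ∀ d ∈ f.support, d none = 0 := by
    obtain ⟨d, hd, hmax⟩ := f.support.exists_max_image (fun d => d none) hne
    suffices h0 : d none = 0 by
      intro d' hd'
      exact Nat.le_zero.mp (h0 ▸ hmax d' hd')
    have hz : MvPolynomial.coeff (d + Finsupp.single none 1 - Finsupp.single (some i) 1) f
        = 0 := by
      by_contra hcc
      have := hmax _ (MvPolynomial.mem_support_iff.mpr hcc)
      simp [Finsupp.single_apply] at this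
    have hc := hcoeff d hz
    obtain ⟨j, hj⟩ := hmul _ (MvPolynomial.mem_support_iff.mpr
      (by rw [hc]; exact MvPolynomial.mem_support_iff.mp hd))
    by_cases h2 : 2 ≤ g j i
    · rw [partialPolarGen, if_pos h2, add_le_add_iff_right] at hj
      by_contra h0
      refine hstd d hd ⟨j, ?_⟩
      rw [partialPolarGen, if_pos h2, Finsupp.le_def]
      intro o
      match o with
      | none =>
        simp only [Finsupp.add_apply, embedExp_none, Finsupp.single_apply]
        simp only [if_true]
        omega
      | some m =>
        have := Finsupp.le_def.mp hj (some m)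
        simp [Finsupp.single_apply]
        exact this
    · rw [partialPolarGen, if_neg h2] at hj
      refine absurd ⟨j, ?_⟩ (hstd d hd)
      rw [partialPolarGen, if_neg h2]
      exact embedExp_le_of_le_add_none _ _ hj
  -- Step B: take any `d` in the support, derive a contradiction.
  obtain ⟨d, hd⟩ := hne
  have hd0 : d none = 0 := hnone d hd
  have hz : MvPolynomial.coeff (d + Finsupp.single none 1 - Finsupp.single (some i) 1) f
      = 0 := by
    by_contra hcc
    have := hnone _ (MvPolynomial.mem_support_iff.mpr hcc)
    simp [Finsupp.single_apply] at this
  have hc := hcoeff d hz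
  obtain ⟨j, hj⟩ := hmul _ (MvPolynomial.mem_support_iff.mpr
    (by rw [hc]; exact MvPolynomial.mem_support_iff.mp hd))
  by_cases h2 : 2 ≤ g j i
  · rw [partialPolarGen, if_pos h2, add_le_add_iff_right] at hj
    -- get `d (some i) ≥ 1`
    have hdi : 1 ≤ d (some i) := by
      have := Finsupp.le_def.mp hj (some i)
      rw [embedExp_some, Finsupp.tsub_apply, Finsupp.single_apply, if_pos rfl] at this
      omega
    -- Step C: look at coefficient at `d + single (some i) 1`
    have hc2 : MvPolynomial.coeff (d + Finsupp.single (some i) 1)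
        ((MvPolynomial.X none - MvPolynomial.X (some i)) * f) = - MvPolynomial.coeff d f := by
      rw [sub_mul, MvPolynomial.coeff_sub, MvPolynomial.coeff_X_mul', MvPolynomial.coeff_X_mul']
      have h1 : none ∉ (d + Finsupp.single (some i) 1).support := by
        simp [Finsupp.mem_support_iff, Finsupp.single_apply, hd0]
      have h2' : some i ∈ (d + Finsupp.single (some i) 1).support := by
        simp [Finsupp.mem_support_iff]
      rw [if_neg h1, if_pos h2', add_tsub_cancel_right, zero_sub]
    have hcne : MvPolynomial.coeff (d + Finsupp.single (some i) 1)
        ((MvPolynomial.X none - MvPolynomial.X (some i)) * f) ≠ 0 := by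
      rw [hc2]
      exact neg_ne_zero.mpr (MvPolynomial.mem_support_iff.mp hd)
    obtain ⟨k, hk⟩ := hmul _ (MvPolynomial.mem_support_iff.mpr hcne)
    by_cases h2k : 2 ≤ g k i
    · rw [partialPolarGen, if_pos h2k] at hk
      have := Finsupp.le_def.mp hk none
      simp [Finsupp.single_apply, embedExp_none, hd0] at this
    · rw [partialPolarGen, if_neg h2k] at hk
      refine hstd d hd ⟨k, ?_⟩
      rw [partialPolarGen, if_neg h2k, Finsupp.le_def]
      intro o
      match o with
      | none => simp [embedExp_none]
      | some m =>
        have := Finsupp.le_def.mp hk (some m)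
        rw [embedExp_some] at this ⊢
        simp only [Finsupp.add_apply, Finsupp.single_apply] at this
        by_cases hm : m = i
        · subst hm
          omega
        · rw [if_neg (fun h => hm (Option.some_injective _ h).symm), add_zero] at this
          exact this
  · rw [partialPolarGen, if_neg h2] at hj
    refine absurd ⟨j, ?_⟩ (hstd d hd)
    rw [partialPolarGen, if_neg h2]
    exact embedExp_le_of_le_add_none _ _ hj

/-- `y - x_i` is a nonzerodivisor on `R'/I'`, where `I'` is the partial
polarization of the monomial ideal `I` with respect to `x_i`. -/
theorem partial_polarization_nonzerodivisor {N s : ℕ} (i : Fin N)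
    (g : Fin s → (Fin N →₀ ℕ))
    (I : Ideal (MvPolynomial (Fin N) ℂ))
    (hgen : I = Ideal.span (Set.range fun j => MvPolynomial.monomial (g j) (1 : ℂ)))
    (hmin : ∀ j k : Fin s, g j ≤ g k → j = k)
    (hx : ∃ j, 2 ≤ g j i)
    (I' : Ideal (MvPolynomial (Option (Fin N)) ℂ))
    (hI' : I' = Ideal.span
      (Set.range fun j => MvPolynomial.monomial (partialPolarGen i (g j)) (1 : ℂ))) :
    ∀ f : MvPolynomial (Option (Fin N)) ℂ,
      (MvPolynomial.X none - MvPolynomial.X (some i)) * f ∈ I' → f ∈ I' := by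
  classical
  intro f hfm
  set P : Fin s → (Option (Fin N) →₀ ℕ) := fun j => partialPolarGen i (g j) with hP
  have hrange : (Set.range fun j => MvPolynomial.monomial (P j) (1 : ℂ)) =
      (fun s => MvPolynomial.monomial s (1 : ℂ)) '' Set.range P := by
    rw [← Set.range_comp]; rfl
  -- split `f` into its "in-ideal" part and its "standard" part
  set B : (Option (Fin N) →₀ ℕ) → Prop := fun d => ∃ j, P j ≤ d with hB
  set fin : MvPolynomial (Option (Fin N)) ℂ :=
    ∑ d ∈ f.support.filter (fun d => B d), MvPolynomial.monomial d (MvPolynomial.coeff d f)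
    with hfin
  set fstd : MvPolynomial (Option (Fin N)) ℂ :=
    ∑ d ∈ f.support.filter (fun d => ¬ B d), MvPolynomial.monomial d (MvPolynomial.coeff d f)
    with hfstd
  have hsplit : f = fin + fstd := by
    rw [hfin, hfstd, Finset.sum_filter_add_sum_filter_not]
    exact (MvPolynomial.support_sum_monomial_coeff f).symm
  have hfinI : fin ∈ I' := by
    rw [hfin]
    refine Ideal.sum_mem _ (fun d hd => ?_)
    obtain ⟨j, hj⟩ := (Finset.mem_filter.mp hd).2
    have heq : MvPolynomial.monomial d (MvPolynomial.coeff d f) =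
        MvPolynomial.monomial (P j) (1 : ℂ) *
          MvPolynomial.monomial (d - P j) (MvPolynomial.coeff d f) := by
      rw [MvPolynomial.monomial_mul, one_mul, add_tsub_cancel_of_le hj]
    rw [heq, hI']
    exact Ideal.mul_mem_right _ _ (Ideal.subset_span ⟨j, rfl⟩)
  -- the standard part multiplied by `y - x_i` also lies in `I'`
  have hstdmul : (MvPolynomial.X none - MvPolynomial.X (some i)) * fstd ∈ I' := by
    have : fstd = f - fin := by rw [hsplit]; ring
    rw [this, mul_sub]
    exact Ideal.sub_mem _ hfm (Ideal.mul_mem_left _ _ hfinI)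
  -- coefficients of `fstd`
  have hcoeffstd : ∀ d, MvPolynomial.coeff d fstd =
      if d ∈ f.support.filter (fun d => ¬ B d) then MvPolynomial.coeff d f else 0 := by
    intro d
    rw [hfstd, MvPolynomial.coeff_sum]
    simp_rw [MvPolynomial.coeff_monomial]
    exact Finset.sum_ite_eq' _ _ _
  have hstd : ∀ d ∈ fstd.support, ¬ ∃ j, partialPolarGen i (g j) ≤ d := by
    intro d hd
    have := MvPolynomial.mem_support_iff.mp hd
    rw [hcoeffstd d] at this
    by_cases hmem : d ∈ f.support.filter (fun d => ¬ B d)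
    · exact (Finset.mem_filter.mp hmem).2
    · rw [if_neg hmem] at this; exact absurd rfl this
  have hmul : ∀ d ∈ ((MvPolynomial.X none - MvPolynomial.X (some i)) * fstd).support,
      ∃ j, partialPolarGen i (g j) ≤ d := by
    intro d hd
    rw [hI', hrange, MvPolynomial.mem_ideal_span_monomial_image] at hstdmul
    obtain ⟨si, ⟨j, rfl⟩, hle⟩ := hstdmul d hd
    exact ⟨j, hle⟩
  have hzero : fstd = 0 := core_lemma i g fstd hstd hmul
  rw [hsplit, hzero, add_zero]
  exact hfinI
end

section
/- Let I ⊆ R = C[x_1,...,x_N] be a monomial ideal, where R carries a positive multigrading with x_i of weight w_i, and let I' ⊆ R' = C[x_1,...,x_N,y] be the partial polarization of I with respect to x_i, where y is assigned the weight w_i. Then the multigraded K-polynomials of R/I and R'/I' are equal: K_{R/I}(t) = K_{R'/I'}(t). -/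
open MvPolynomial

attribute [local instance] Classical.propDecidable

/-- dim_C of the multidegree-`a` piece of `R/I` for weights `w`. -/
noncomputable def mgradedDim {τ : Type*} {d : ℕ} (w : τ → (Fin d →₀ ℕ))
    (I : Ideal (MvPolynomial τ ℂ)) (a : Fin d →₀ ℕ) : ℕ :=
  Module.finrank ℂ ((MvPolynomial.weightedHomogeneousSubmodule ℂ w a).map
    (Ideal.Quotient.mkₐ ℂ I).toLinearMap)

/-- The multigraded Hilbert series of `R/I` as a multivariate power series. -/
noncomputable def hilbSeries {τ : Type*} {d : ℕ} (w : τ → (Fin d →₀ ℕ))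
    (I : Ideal (MvPolynomial τ ℂ)) : MvPowerSeries (Fin d) ℤ :=
  fun a => (mgradedDim w I a : ℤ)

/-- `K` is the multigraded K-polynomial of `R/I`:
`K(t) = ∏ᵢ (1 - t^{wᵢ}) · HS_{R/I}(t)` as multivariate power series. -/
noncomputable def IsKPolynomial {τ : Type*} [Fintype τ] {d : ℕ} (w : τ → (Fin d →₀ ℕ))
    (I : Ideal (MvPolynomial τ ℂ)) (K : MvPolynomial (Fin d) ℤ) : Prop :=
  (K : MvPowerSeries (Fin d) ℤ) =
    ((∏ v : τ, (1 - MvPolynomial.monomial (w v) (1 : ℤ)) : MvPolynomial (Fin d) ℤ) :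
        MvPowerSeries (Fin d) ℤ) *
      hilbSeries w I

/-- Sum of the terms of lowest total degree of a polynomial. -/
noncomputable def lowestTerms {d : ℕ} (q : MvPolynomial (Fin d) ℤ) : MvPolynomial (Fin d) ℤ :=
  ∑ a ∈ q.support.filter fun a => ∀ b ∈ q.support,
      (a.sum fun _ n => n) ≤ (b.sum fun _ n => n),
    MvPolynomial.monomial a (q.coeff a)

/-- The multidegree read off from a K-polynomial: the lowest-degree terms of `K(1 - t)`. -/
noncomputable def multidegOf {d : ℕ} (K : MvPolynomial (Fin d) ℤ) : MvPolynomial (Fin d) ℤ :=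
  lowestTerms (MvPolynomial.aeval (fun i => (1 - MvPolynomial.X i : MvPolynomial (Fin d) ℤ)) K)

/-!
The Hilbert series coefficient of `R/I` in weight `a` counts the standard monomials (those outside
`I`) of weight `a`. A standard monomial of `I'` of weight `a` either is a standard monomial of `I`
(free of `y`), or can be divided by `y` if `y` occurs and by `x_i` otherwise, giving a standard
monomial of `I'` of weight `a - w_i`; the inverse multiplies by `y` if that keeps the monomial
standard and by `x_i` otherwise. Hence `HS_{R/I} = (1 - t^{w_i}) HS_{R'/I'}`, which is cancelled by
the extra factor `1 - t^{w_i}` (for `y`) in the K-polynomial of `R'/I'`. Algebraically: `y - x_i` is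
a nonzerodivisor on `R'/I'` with quotient `R/I`.
-/

open Finsupp

theorem Finsupp.finite_setOf_weight_eq {σ : Type*} [Finite σ] {d : ℕ} {w : σ → (Fin d →₀ ℕ)}
    (hw : ∀ t, w t ≠ 0) (a : Fin d →₀ ℕ) : {b : σ →₀ ℕ | weight w b = a}.Finite := by
  have hdeg : ∀ b : σ →₀ ℕ, degree (weight w b) = weight (fun t => degree (w t)) b := fun b => by
    simp only [weight_apply, map_finsuppSum, map_nsmul, smul_eq_mul]
  refine (finite_of_nat_weight_eq (fun t => degree (w t)) (fun t => ?_) (degree a)).subset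
    fun b hb => ?_
  · exact (degree_eq_zero_iff (w t)).not.mpr (hw t)
  · rw [Set.mem_ofPred_eq] at hb ⊢
    rw [← hdeg, hb]

theorem Finsupp.optionElim_le_iff {α M : Type*} [Zero M] [LE M] {n : M} {f : α →₀ M}
    {c : Option α →₀ M} : f.optionElim n ≤ c ↔ n ≤ c none ∧ f ≤ c.some := by
  simp only [Finsupp.le_def, Option.forall, optionElim_apply_eq_elim, Option.elim_none,
    Option.elim_some, some_apply]

theorem Finsupp.weight_optionElim {α M : Type*} [AddCommMonoid M] (v : M) (w : α → M) (n : ℕ)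
    (f : α →₀ ℕ) :
    weight (fun o : Option α => o.elim v w) (f.optionElim n) = n • v + weight w f := by
  rw [weight_apply, sum_option_index_smul]
  simp [weight_apply]

theorem MvPolynomial.restrictSupport_union {σ R : Type*} [CommSemiring R] (s t : Set (σ →₀ ℕ)) :
    restrictSupport R (s ∪ t) = restrictSupport R s ⊔ restrictSupport R t := by
  simp only [restrictSupport_eq_span, Set.image_union, Submodule.span_union]

def standardExponents {σ M : Type*} [AddCommMonoid M] (w : σ → M) (G : Set (σ →₀ ℕ)) (a : M) :
    Set (σ →₀ ℕ) :=
  {b | weight w b = a} \ upperClosure G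

theorem mgradedDim_span_monomial {σ : Type*} {d : ℕ} (w : σ → (Fin d →₀ ℕ))
    (G : Set (σ →₀ ℕ)) (a : Fin d →₀ ℕ) :
    mgradedDim w (Ideal.span ((monomial · (1 : ℂ)) '' G)) a =
      Nat.card (standardExponents w G a) := by
  set W := {b : σ →₀ ℕ | weight w b = a}
  set U := (upperClosure G : Set (σ →₀ ℕ))
  set L := (Ideal.Quotient.mkₐ ℂ (Ideal.span ((monomial · (1 : ℂ)) '' G))).toLinearMap
  have mem_ker : ∀ p, p ∈ LinearMap.ker L ↔ ↑p.support ⊆ U := fun p => by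
    simp [L, U, Ideal.Quotient.eq_zero_iff_mem, mem_ideal_span_monomial_image, Set.subset_def]
  have hsplit : weightedHomogeneousSubmodule ℂ w a =
      restrictSupport ℂ (W \ U) ⊔ restrictSupport ℂ (W ∩ U) := by
    rw [← restrictSupport_union, Set.sdiff_union_inter]
    exact weightedHomogeneousSubmodule_eq_finsupp_supported ℂ w a
  have hkill : restrictSupport ℂ (W ∩ U) ≤ LinearMap.ker L := fun p hp =>
    (mem_ker p).mpr (hp.trans Set.inter_subset_right)
  have hinj : Function.Injective (L.domRestrict (restrictSupport ℂ (W \ U))) := by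
    rw [← LinearMap.ker_eq_bot, LinearMap.ker_eq_bot']
    rintro ⟨p, hp⟩ hLp
    have hsupp : p.support = ∅ :=
      Finset.eq_empty_of_forall_notMem fun b hb => (hp hb).2 ((mem_ker p).mp hLp hb)
    exact Subtype.ext (support_eq_empty.mp hsupp)
  rw [mgradedDim, hsplit, Submodule.map_sup, LinearMap.le_ker_iff_map.mp hkill, sup_bot_eq,
    ← LinearMap.range_domRestrict, LinearMap.finrank_range_of_inj hinj,
    Module.finrank_eq_nat_card_basis (basisRestrictSupport ℂ _), standardExponents]

section Polarization

variable {N : ℕ} {i : Fin N} {G : Set (Fin N →₀ ℕ)}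

abbrev polarWeight {M : Type*} (i : Fin N) (w : Fin N → M) : Option (Fin N) → M :=
  fun o => o.elim (w i) w

theorem embedExp_eq_optionElim (b : Fin N →₀ ℕ) : embedExp b = b.optionElim 0 := by
  ext (_ | x)
  · simpa [embedExp] using mapDomain_of_notMem_range (f := Option.some) b none (by simp)
  · simpa [embedExp] using mapDomain_apply (Option.some_injective _) b x

theorem embedExp_injective : Function.Injective (embedExp (N := N)) :=
  mapDomain_injective (Option.some_injective _)

theorem embedExp_some_s5 {c : Option (Fin N) →₀ ℕ} (h0 : c none = 0) : embedExp c.some = c := by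
  rw [embedExp_eq_optionElim, ← h0, optionElim_some]

theorem mem_image_embedExp_iff {S : Set (Fin N →₀ ℕ)} {c : Option (Fin N) →₀ ℕ} :
    c ∈ embedExp '' S ↔ c none = 0 ∧ c.some ∈ S := by
  constructor
  · rintro ⟨b, hb, rfl⟩
    simpa [embedExp_eq_optionElim] using hb
  · rintro ⟨h0, hS⟩
    exact ⟨c.some, hS, embedExp_some_s5 h0⟩

theorem weight_embedExp {M : Type*} [AddCommMonoid M] (w : Fin N → M) (b : Fin N →₀ ℕ) :
    weight (polarWeight i w) (embedExp b) = weight w b := by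
  rw [embedExp_eq_optionElim, weight_optionElim, zero_smul, zero_add]

theorem partialPolarGen_le_iff_of_two_le {u : Fin N →₀ ℕ} (hu : 2 ≤ u i)
    {c : Option (Fin N) →₀ ℕ} :
    partialPolarGen i u ≤ c ↔ 1 ≤ c none ∧ u - single i 1 ≤ c.some := by
  rw [partialPolarGen, if_pos hu, embedExp_eq_optionElim, ← optionElim_zero, ← optionElim_add,
    add_zero, zero_add, optionElim_le_iff]

theorem partialPolarGen_le_iff_of_lt_two {u : Fin N →₀ ℕ} (hu : u i < 2)
    {c : Option (Fin N) →₀ ℕ} : partialPolarGen i u ≤ c ↔ u ≤ c.some := by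
  rw [partialPolarGen, if_neg hu.not_ge, embedExp_eq_optionElim, optionElim_le_iff]
  simp

theorem embedExp_notMem_upperClosure {b : Fin N →₀ ℕ} (hb : b ∉ upperClosure G) :
    embedExp b ∉ upperClosure (partialPolarGen i '' G) := by
  rw [mem_upperClosure]
  rintro ⟨_, ⟨u, hu, rfl⟩, hle⟩
  rcases le_or_gt 2 (u i) with h | h
  · simpa [embedExp_eq_optionElim] using ((partialPolarGen_le_iff_of_two_le h).mp hle).1
  · refine hb (mem_upperClosure.mpr ⟨u, hu, ?_⟩)
    simpa [embedExp_eq_optionElim] using (partialPolarGen_le_iff_of_lt_two h).mp hle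

theorem exists_two_le_of_some_mem {c : Option (Fin N) →₀ ℕ}
    (hc : c ∉ upperClosure (partialPolarGen i '' G)) (h : c.some ∈ upperClosure G) :
    ∃ u ∈ G, 2 ≤ u i ∧ u ≤ c.some := by
  obtain ⟨u, hu, hle⟩ := mem_upperClosure.mp h
  refine ⟨u, hu, not_lt.mp fun h2 => hc (mem_upperClosure.mpr ?_), hle⟩
  exact ⟨_, ⟨u, hu, rfl⟩, (partialPolarGen_le_iff_of_lt_two h2).mpr hle⟩

theorem exists_of_add_single_none_mem {c : Option (Fin N) →₀ ℕ}
    (hc : c ∉ upperClosure (partialPolarGen i '' G))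
    (hy : c + single none 1 ∈ upperClosure (partialPolarGen i '' G)) :
    ∃ u ∈ G, 2 ≤ u i ∧ c none = 0 ∧ u - single i 1 ≤ c.some := by
  obtain ⟨_, ⟨u, hu, rfl⟩, hle⟩ := mem_upperClosure.mp hy
  have hsome : (c + single none 1).some = c.some := by simp [some_add, some_single_none]
  rcases lt_or_ge (u i) 2 with h | h
  · rw [partialPolarGen_le_iff_of_lt_two h, hsome, ← partialPolarGen_le_iff_of_lt_two h] at hle
    exact (hc (mem_upperClosure.mpr ⟨_, ⟨u, hu, rfl⟩, hle⟩)).elim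
  · obtain ⟨-, hsub⟩ := (partialPolarGen_le_iff_of_two_le h).mp hle
    rw [hsome] at hsub
    refine ⟨u, hu, h, ?_, hsub⟩
    by_contra h0
    exact hc (mem_upperClosure.mpr ⟨_, ⟨u, hu, rfl⟩,
      (partialPolarGen_le_iff_of_two_le h).mpr ⟨Nat.one_le_iff_ne_zero.mpr h0, hsub⟩⟩)

variable (i) in
noncomputable def divYOrX (c : Option (Fin N) →₀ ℕ) : Option (Fin N) →₀ ℕ :=
  if c none = 0 then c - single (some i) 1 else c - single none 1

variable (i G) in
noncomputable def mulYOrX (c : Option (Fin N) →₀ ℕ) : Option (Fin N) →₀ ℕ :=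
  if c + single none 1 ∈ upperClosure (partialPolarGen i '' G) then c + single (some i) 1
  else c + single none 1

theorem divYOrX_notMem {c : Option (Fin N) →₀ ℕ}
    (hc : c ∉ upperClosure (partialPolarGen i '' G)) :
    divYOrX i c ∉ upperClosure (partialPolarGen i '' G) := by
  refine fun h => hc ((upperClosure _).upper ?_ h)
  unfold divYOrX
  split_ifs <;> exact tsub_le_self

theorem mulYOrX_notMem {c : Option (Fin N) →₀ ℕ}
    (hc : c ∉ upperClosure (partialPolarGen i '' G)) :
    mulYOrX i G c ∉ upperClosure (partialPolarGen i '' G) := by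
  unfold mulYOrX
  split_ifs with hy
  · obtain ⟨u, -, hu2, h0, hsub⟩ := exists_of_add_single_none_mem hc hy
    rw [mem_upperClosure]
    rintro ⟨_, ⟨v, hv, rfl⟩, hle⟩
    rcases le_or_gt 2 (v i) with h | h
    · simpa [h0] using ((partialPolarGen_le_iff_of_two_le h).mp hle).1
    · rw [partialPolarGen_le_iff_of_lt_two h, some_add, some_single_some] at hle
      refine hc (mem_upperClosure.mpr ⟨_, ⟨v, hv, rfl⟩,
        (partialPolarGen_le_iff_of_lt_two h).mpr fun x => ?_⟩)
      have hx := hle x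
      rcases eq_or_ne x i with rfl | hne
      · -- `v x ≤ 1 ≤ u x - 1 ≤ c (some x)`
        have hi := hsub x
        simp only [tsub_apply, single_eq_same, Finsupp.coe_add, Pi.add_apply] at hi hx
        omega
      · simpa [single_apply, hne.symm] using hx
  · exact hy

theorem some_mulYOrX_mem {c : Option (Fin N) →₀ ℕ}
    (hc : c ∉ upperClosure (partialPolarGen i '' G)) (h0 : mulYOrX i G c none = 0) :
    (mulYOrX i G c).some ∈ upperClosure G := by
  unfold mulYOrX at h0 ⊢
  split_ifs at h0 ⊢ with hy
  · obtain ⟨u, hu, hu2, -, hsub⟩ := exists_of_add_single_none_mem hc hy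
    refine mem_upperClosure.mpr ⟨u, hu, ?_⟩
    rw [some_add, some_single_some]
    calc u = (u - single i 1) + single i 1 :=
          (tsub_add_cancel_of_le (single_le_iff.mpr (by omega))).symm
      _ ≤ c.some + single i 1 := add_le_add_left hsub _
  · simp at h0

theorem divYOrX_mulYOrX {c : Option (Fin N) →₀ ℕ}
    (hc : c ∉ upperClosure (partialPolarGen i '' G)) : divYOrX i (mulYOrX i G c) = c := by
  unfold mulYOrX
  split_ifs with hy
  · obtain ⟨-, -, -, h0, -⟩ := exists_of_add_single_none_mem hc hy
    rw [divYOrX, if_pos (by simp [h0])]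
    exact add_tsub_cancel_right _ _
  · rw [divYOrX, if_neg (by simp)]
    exact add_tsub_cancel_right _ _

theorem mulYOrX_divYOrX {c : Option (Fin N) →₀ ℕ}
    (hc : c ∉ upperClosure (partialPolarGen i '' G))
    (hB : c none = 0 → c.some ∈ upperClosure G) : mulYOrX i G (divYOrX i c) = c := by
  unfold divYOrX
  split_ifs with h0
  · obtain ⟨u, hu, hu2, hle⟩ := exists_two_le_of_some_mem hc (hB h0)
    have hci : 1 ≤ c (some i) := by
      have := hle i
      rw [some_apply] at this
      omega
    have hy : c - single (some i) 1 + single none 1 ∈ upperClosure (partialPolarGen i '' G) := by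
      refine mem_upperClosure.mpr ⟨_, ⟨u, hu, rfl⟩,
        (partialPolarGen_le_iff_of_two_le hu2).mpr ⟨by simp, fun x => ?_⟩⟩
      have := hle x
      rcases eq_or_ne x i with rfl | hne
      · simp only [some_apply, tsub_apply, single_eq_same, Finsupp.coe_add, Pi.add_apply,
          single_apply, reduceCtorEq, if_false, add_zero] at this ⊢
        omega
      · simpa [single_apply, hne.symm] using this
    rw [mulYOrX, if_pos hy, tsub_add_cancel_of_le (single_le_iff.mpr hci)]
  · rw [mulYOrX, tsub_add_cancel_of_le (single_le_iff.mpr (Nat.one_le_iff_ne_zero.mpr h0)),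
      if_neg hc]

variable {d : ℕ} (w : Fin N → (Fin d →₀ ℕ))

theorem weight_mulYOrX (c : Option (Fin N) →₀ ℕ) :
    weight (polarWeight i w) (mulYOrX i G c) = weight (polarWeight i w) c + w i := by
  unfold mulYOrX
  split_ifs <;> simp [weight_single]

theorem weight_divYOrX_add {c : Option (Fin N) →₀ ℕ}
    (hc : c ∉ upperClosure (partialPolarGen i '' G))
    (hB : c none = 0 → c.some ∈ upperClosure G) :
    weight (polarWeight i w) (divYOrX i c) + w i = weight (polarWeight i w) c := by
  conv_rhs => rw [← mulYOrX_divYOrX hc hB, weight_mulYOrX]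

theorem bijOn_divYOrX {a : Fin d →₀ ℕ} (ha : w i ≤ a) :
    Set.BijOn (divYOrX i)
      {c | weight (polarWeight i w) c = a ∧ c ∉ upperClosure (partialPolarGen i '' G) ∧
        (c none = 0 → c.some ∈ upperClosure G)}
      (standardExponents (polarWeight i w) (partialPolarGen i '' G) (a - w i)) := by
  refine Set.InvOn.bijOn (f' := mulYOrX i G) ⟨fun c hc => mulYOrX_divYOrX hc.2.1 hc.2.2,
    fun c hc => divYOrX_mulYOrX hc.2⟩ (fun c ⟨hwc, hc, hB⟩ => ⟨?_, divYOrX_notMem hc⟩)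
    fun c ⟨hwc, hc⟩ => ⟨?_, mulYOrX_notMem hc, some_mulYOrX_mem hc⟩
  · rw [Set.mem_ofPred_eq, ← hwc, ← weight_divYOrX_add w hc hB, add_tsub_cancel_right]
  · rw [weight_mulYOrX, hwc.out, tsub_add_cancel_of_le ha]

theorem ncard_standardExponents_partialPolarGen (hw : ∀ t, w t ≠ 0) (a : Fin d →₀ ℕ) :
    (standardExponents (polarWeight i w) (partialPolarGen i '' G) a).ncard =
      (standardExponents w G a).ncard + if w i ≤ a then
        (standardExponents (polarWeight i w) (partialPolarGen i '' G) (a - w i)).ncard else 0 := by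
  set D := {c | weight (polarWeight i w) c = a ∧ c ∉ upperClosure (partialPolarGen i '' G) ∧
    (c none = 0 → c.some ∈ upperClosure G)}
  have hsplit : standardExponents (polarWeight i w) (partialPolarGen i '' G) a =
      embedExp '' standardExponents w G a ∪ D := by
    ext c
    simp only [standardExponents, Set.mem_union, Set.mem_sdiff, mem_image_embedExp_iff, D]
    by_cases h0 : c none = 0
    · have hwc := weight_embedExp (i := i) w c.some
      have hU := embedExp_notMem_upperClosure (i := i) (G := G) (b := c.some)
      rw [embedExp_some_s5 h0] at hwc hU
      simp only [Set.mem_ofPred_eq, SetLike.mem_coe, hwc, h0, true_and, forall_const]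
      tauto
    · simp [h0]
  have hdisj : Disjoint (embedExp '' standardExponents w G a) D := by
    rw [Set.disjoint_left]
    rintro c hc ⟨-, -, hB⟩
    rw [mem_image_embedExp_iff] at hc
    exact hc.2.2 (hB hc.1)
  have hD : D.ncard = if w i ≤ a then
      (standardExponents (polarWeight i w) (partialPolarGen i '' G) (a - w i)).ncard else 0 := by
    split_ifs with ha
    · exact (bijOn_divYOrX w ha).ncard_eq
    · suffices D = ∅ by rw [this, Set.ncard_empty]
      refine Set.eq_empty_of_forall_notMem fun c ⟨hwc, hc, hB⟩ => ha ?_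
      rw [← hwc, ← weight_divYOrX_add w hc hB]
      exact le_add_self
  have hfinD : D.Finite :=
    (finite_setOf_weight_eq (by rintro (_ | t) <;> exact hw _) a).subset fun c hc => hc.1
  rw [hsplit, Set.ncard_union_eq hdisj
    (((finite_setOf_weight_eq hw a).subset Set.sdiff_subset).image _) hfinD,
    Set.ncard_image_of_injective _ embedExp_injective, hD]

end Polarization

theorem hilbSeries_span_monomial_eq_mul {N d : ℕ} (i : Fin N) (w : Fin N → (Fin d →₀ ℕ))
    (hw : ∀ t, w t ≠ 0) (G : Set (Fin N →₀ ℕ)) :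
    hilbSeries w (Ideal.span ((monomial · (1 : ℂ)) '' G)) =
      ((1 - monomial (w i) (1 : ℤ) : MvPolynomial (Fin d) ℤ) : MvPowerSeries (Fin d) ℤ) *
        hilbSeries (polarWeight i w)
          (Ideal.span ((monomial · (1 : ℂ)) '' (partialPolarGen i '' G))) := by
  have hcoe : ((1 - monomial (w i) 1 : MvPolynomial (Fin d) ℤ) : MvPowerSeries (Fin d) ℤ) =
      1 - MvPowerSeries.monomial (w i) 1 := by
    rw [eq_sub_iff_add_eq, ← coe_monomial, ← MvPolynomial.coe_add, sub_add_cancel,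
      MvPolynomial.coe_one]
  ext a
  rw [hcoe, sub_mul, one_mul, map_sub, MvPowerSeries.coeff_monomial_mul, one_mul]
  simp only [hilbSeries, MvPowerSeries.coeff_apply, mgradedDim_span_monomial, Nat.card_coe_set_eq]
  rw [ncard_standardExponents_partialPolarGen w hw a]
  split_ifs <;> push_cast <;> ring

theorem partial_polarization_preserves_kpolynomial_general {N s d : ℕ} (i : Fin N)
    (w : Fin N → (Fin d →₀ ℕ)) (hpos : ∀ i', w i' ≠ 0)
    (g : Fin s → (Fin N →₀ ℕ))
    (I : Ideal (MvPolynomial (Fin N) ℂ))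
    (hgen : I = Ideal.span (Set.range fun j => MvPolynomial.monomial (g j) (1 : ℂ)))
    (I' : Ideal (MvPolynomial (Option (Fin N)) ℂ))
    (hI' : I' = Ideal.span
      (Set.range fun j => MvPolynomial.monomial (partialPolarGen i (g j)) (1 : ℂ)))
    (K K' : MvPolynomial (Fin d) ℤ)
    (hK : IsKPolynomial w I K)
    (hK' : IsKPolynomial (fun o : Option (Fin N) => o.elim (w i) w) I' K') :
    K = K' := by
  rw [hgen, Set.range_comp' (monomial · (1 : ℂ)) g, IsKPolynomial,
    hilbSeries_span_monomial_eq_mul i w hpos] at hK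
  rw [hI', Set.range_comp' (monomial · (1 : ℂ)), Set.range_comp', IsKPolynomial,
    Fintype.prod_option, MvPolynomial.coe_mul] at hK'
  simp only [Option.elim_none, Option.elim_some] at hK'
  apply coe_inj.mp
  rw [hK, hK']
  ring

/-- Partial polarization preserves the multigraded K-polynomial:
`K_{R/I}(t) = K_{R'/I'}(t)`, where the new variable `y` has the weight of `x_i`. -/
theorem partial_polarization_preserves_kpolynomial {N s d : ℕ} (i : Fin N)
    (w : Fin N → (Fin d →₀ ℕ)) (hpos : ∀ i', w i' ≠ 0)
    (g : Fin s → (Fin N →₀ ℕ))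
    (I : Ideal (MvPolynomial (Fin N) ℂ))
    (hgen : I = Ideal.span (Set.range fun j => MvPolynomial.monomial (g j) (1 : ℂ)))
    (hmin : ∀ j k : Fin s, g j ≤ g k → j = k)
    (hx : ∃ j, 2 ≤ g j i)
    (I' : Ideal (MvPolynomial (Option (Fin N)) ℂ))
    (hI' : I' = Ideal.span
      (Set.range fun j => MvPolynomial.monomial (partialPolarGen i (g j)) (1 : ℂ)))
    (K K' : MvPolynomial (Fin d) ℤ)
    (hK : IsKPolynomial w I K)
    (hK' : IsKPolynomial (fun o : Option (Fin N) => o.elim (w i) w) I' K') :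
    K = K' :=
  partial_polarization_preserves_kpolynomial_general i w hpos g I hgen I' hI' K K' hK hK'
end

section
/- Let I ⊆ R = C[x_1,...,x_N] be a monomial ideal, where R carries a positive multigrading with x_i of weight w_i, and let Ĩ ⊆ R̃ be the polarization of I, where each new variable x_{ik} is assigned the weight w_i. Then K_{R/I}(t) = K_{R̃/Ĩ}(t); in particular, mdeg_{R/I}(t) = mdeg_{R̃/Ĩ}(t). -/
/-!
Let `I` be generated by `x^{g_1}, …, x^{g_s}`. Inclusion–exclusion over the sets `S` of
generators counts the standard monomials of each multidegree, and shows that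
`HS_R · ∑_S (-1)^{|S|} t^{deg lcm_{j ∈ S} x^{g_j}} = HS_{R/I}` (the numerator of the Taylor
resolution). The factor `∏ (1 - t^{w_i})` is the Taylor numerator of the ideal of the variables,
whose only standard monomial is `1`; hence it inverts `HS_R`, and the K-polynomial of `R/I` is its
Taylor numerator. Polarization turns `lcm_{j ∈ S} x^{g_j} = x^{max_{j ∈ S} g_j}` into
`∏_i ∏_{k < max_{j ∈ S} g_{j i}} x_{i k}`, which has the same multidegree, so the two Taylor
numerators agree term by term.
-/

open MvPolynomial

attribute [local instance] Classical.propDecidable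

/-- The exponent of the polarization of the minimal generator `x^{g j}`, in the ring with
variables `x_{(i,k)}` for `i : Fin N`, `k : Fin (m i)`:
`∏_i ∏_{k < (g j) i} x_{(i,k)}`. -/
noncomputable def polarExpFin {N s : ℕ} (g : Fin s → (Fin N →₀ ℕ)) (m : Fin N → ℕ)
    (j : Fin s) : ((i : Fin N) × Fin (m i)) →₀ ℕ :=
  ∑ v : (i : Fin N) × Fin (m i),
    if (v.2 : ℕ) < g j v.1 then Finsupp.single v 1 else 0

open scoped Finset

namespace MonomialIdeal

variable {τ : Type*} {d : ℕ}

lemma finsetSup_apply {ι : Type*} (S : Finset ι) (f : ι → (τ →₀ ℕ)) (x : τ) :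
    S.sup f x = S.sup (f · x) :=
  Finset.apply_sup_eq_sup_comp (fun f : τ →₀ ℕ => f x) (fun _ _ => Finsupp.sup_apply ..) rfl

lemma finsetSup_single_one (T : Finset τ) :
    T.sup (fun v => Finsupp.single v 1) = ∑ v ∈ T, Finsupp.single v 1 := by
  ext i
  rw [finsetSup_apply, Finsupp.finsetSum_apply]
  simp only [Finsupp.single_apply, Finset.sum_ite_eq']
  split_ifs with hi
  · exact le_antisymm (Finset.sup_le fun v _ => by split_ifs <;> simp)
      (Finset.le_sup_of_le hi (by simp))
  · exact Nat.eq_zero_of_le_zero (Finset.sup_le fun v hv => by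
      rw [if_neg (by rintro rfl; exact hi hv)])

lemma sum_neg_one_pow_card_filter_sup_le {ι : Type*} [Fintype ι] (c : ι → (τ →₀ ℕ))
    (e : τ →₀ ℕ) :
    ∑ S : Finset ι with S.sup c ≤ e, (-1 : ℤ) ^ #S = if ∀ j, ¬ c j ≤ e then 1 else 0 := by
  have hS : ({S | S.sup c ≤ e} : Finset (Finset ι)) = ({j | c j ≤ e} : Finset ι).powerset := by
    ext S
    simp [Finset.sup_le_iff, Finset.subset_iff]
  rw [hS, Finset.sum_powerset_neg_one_pow_card]
  simp [Finset.filter_eq_empty_iff]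

lemma apply_le_degree_weight {w : τ → (Fin d →₀ ℕ)} (hw : ∀ i, w i ≠ 0) (e : τ →₀ ℕ) (i : τ) :
    e i ≤ (Finsupp.weight w e).degree := by
  have hdeg : (Finsupp.weight w e).degree = Finsupp.weight (fun i => (w i).degree) e := by
    simp [Finsupp.weight_apply, map_finsuppSum]
  rw [hdeg]
  exact Finsupp.le_weight (fun i => (w i).degree) ((Finsupp.degree_eq_zero_iff _).not.mpr (hw i)) e

section Series

variable [Fintype τ] {w : τ → (Fin d →₀ ℕ)}

/-- The exponents of weight `a`, cut out of a box so that the set is visibly finite; the box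
contains all of them once every weight is nonzero (`mem_weightFiber`). -/
noncomputable def weightFiber (w : τ → (Fin d →₀ ℕ)) (a : Fin d →₀ ℕ) : Finset (τ →₀ ℕ) :=
  {e ∈ Finset.Iic (Finsupp.equivFunOnFinite.symm fun _ => a.degree) | Finsupp.weight w e = a}

lemma mem_weightFiber (hw : ∀ i, w i ≠ 0) {a : Fin d →₀ ℕ} {e : τ →₀ ℕ} :
    e ∈ weightFiber w a ↔ Finsupp.weight w e = a := by
  refine ⟨fun h => (Finset.mem_filter.mp h).2, fun h => Finset.mem_filter.mpr ⟨?_, h⟩⟩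
  exact Finset.mem_Iic.mpr fun i => by simpa [← h] using apply_le_degree_weight hw e i

lemma card_filter_le_weightFiber (hw : ∀ i, w i ≠ 0) (b : τ →₀ ℕ) (a : Fin d →₀ ℕ) :
    #{e ∈ weightFiber w a | b ≤ e} =
      if Finsupp.weight w b ≤ a then #(weightFiber w (a - Finsupp.weight w b)) else 0 := by
  split_ifs with hba
  · refine Finset.card_nbij' (· - b) (· + b) (fun e he => ?_) (fun e he => ?_)
      (fun e he => tsub_add_cancel_of_le (Finset.mem_filter.mp he).2)
      (fun e _ => add_tsub_cancel_right e b)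
    · obtain ⟨he, hbe⟩ := Finset.mem_filter.mp he
      rw [Finset.mem_coe, mem_weightFiber hw]
      exact eq_tsub_of_add_eq <| by
        rw [← map_add, tsub_add_cancel_of_le hbe, (mem_weightFiber hw).mp he]
    · rw [Finset.mem_coe, mem_weightFiber hw] at he
      simp only [Finset.coe_filter, Set.mem_ofPred_eq, mem_weightFiber hw, map_add, he,
        tsub_add_cancel_of_le hba, le_add_self, and_self]
  · refine Finset.card_eq_zero.mpr (Finset.filter_eq_empty_iff.mpr fun e he hbe => hba ?_)
    rw [← (mem_weightFiber hw).mp he, ← tsub_add_cancel_of_le hbe, map_add]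
    exact le_add_self

/-- The Hilbert series of the polynomial ring. -/
noncomputable def fiberSeries (w : τ → (Fin d →₀ ℕ)) : MvPowerSeries (Fin d) ℤ :=
  fun a => #(weightFiber w a)

noncomputable def standardSeries {ι : Type*} (w : τ → (Fin d →₀ ℕ)) (c : ι → (τ →₀ ℕ)) :
    MvPowerSeries (Fin d) ℤ :=
  fun a => #{e ∈ weightFiber w a | ∀ j, ¬ c j ≤ e}

/-- The numerator read off from the Taylor resolution of the ideal generated by the `x^{c j}`:
the face `S` of the simplex sits in the multidegree of `lcm_{j ∈ S} x^{c j}`. -/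
noncomputable def taylorPoly {ι : Type*} [Fintype ι] (w : τ → (Fin d →₀ ℕ))
    (c : ι → (τ →₀ ℕ)) : MvPolynomial (Fin d) ℤ :=
  ∑ S : Finset ι, monomial (Finsupp.weight w (S.sup c)) ((-1 : ℤ) ^ #S)

lemma coeff_monomial_mul_fiberSeries (hw : ∀ i, w i ≠ 0) (b : τ →₀ ℕ) (r : ℤ)
    (a : Fin d →₀ ℕ) :
    MvPowerSeries.coeff a (MvPowerSeries.monomial (Finsupp.weight w b) r * fiberSeries w) =
      ∑ e ∈ weightFiber w a, if b ≤ e then r else 0 := by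
  rw [MvPowerSeries.coeff_monomial_mul, Finset.sum_ite, Finset.sum_const_zero, add_zero,
    Finset.sum_const, card_filter_le_weightFiber hw]
  split_ifs <;> simp [fiberSeries, MvPowerSeries.coeff_apply, mul_comm]

lemma taylorPoly_mul_fiberSeries (hw : ∀ i, w i ≠ 0) {ι : Type*} [Fintype ι]
    (c : ι → (τ →₀ ℕ)) :
    (taylorPoly w c : MvPowerSeries (Fin d) ℤ) * fiberSeries w = standardSeries w c := by
  ext a
  rw [taylorPoly, ← coeToMvPowerSeries.ringHom_apply, map_sum]
  simp only [coeToMvPowerSeries.ringHom_apply, coe_monomial, Finset.sum_mul, map_sum,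
    coeff_monomial_mul_fiberSeries hw]
  rw [Finset.sum_comm]
  simp only [← Finset.sum_filter, sum_neg_one_pow_card_filter_sup_le]
  simp only [Finset.sum_const, Int.nsmul_eq_mul, mul_one, MvPowerSeries.coeff_apply,
    standardSeries, Nat.cast_inj]
  congr!

lemma prod_one_sub_monomial_eq_taylorPoly (w : τ → (Fin d →₀ ℕ)) :
    ∏ v, (1 - monomial (w v) (1 : ℤ)) = taylorPoly w fun v => Finsupp.single v 1 := by
  rw [Finset.prod_sub, taylorPoly, Finset.powerset_univ]
  refine Finset.sum_congr rfl fun T _ => ?_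
  rw [Finset.prod_const_one, mul_one, finsetSup_single_one, map_sum]
  simp [monomial_sum_index, Finsupp.weight_single]

lemma standardSeries_single_eq_one (hw : ∀ i, w i ≠ 0) :
    standardSeries w (fun v : τ => Finsupp.single v 1) = 1 := by
  ext a
  have hstd : ∀ e : τ →₀ ℕ, (∀ v, ¬ Finsupp.single v 1 ≤ e) ↔ e = 0 := by
    simp [Finsupp.single_le_iff, Finsupp.ext_iff]
  rw [MvPowerSeries.coeff_one, MvPowerSeries.coeff_apply]
  simp only [standardSeries, hstd, Finset.filter_eq', mem_weightFiber hw, map_zero]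
  split_ifs with h₁ h₂ h₂
  · rfl
  · exact absurd h₁.symm h₂
  · exact absurd h₂.symm h₁
  · rfl

end Series

section Quotient

variable {ι K : Type*} [Field K] (g : ι → (τ →₀ ℕ))

noncomputable abbrev spanMonomials : Ideal (MvPolynomial τ K) :=
  Ideal.span (Set.range fun j => monomial (g j) (1 : K))

lemma mem_spanMonomials_iff {p : MvPolynomial τ K} :
    p ∈ spanMonomials g ↔ ∀ e ∈ p.support, ∃ j, g j ≤ e := by
  rw [spanMonomials, Set.range_comp' (fun e => monomial e (1 : K)) g,
    mem_ideal_span_monomial_image]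
  simp

lemma linearIndepOn_mk_monomial :
    LinearIndepOn K (fun e => Ideal.Quotient.mk (spanMonomials (K := K) g) (monomial e 1))
      {e | ∀ j, ¬ g j ≤ e} := by
  have hmon : LinearIndepOn K (fun e => monomial e (1 : K)) {e | ∀ j, ¬ g j ≤ e} :=
    coe_basisMonomials τ K ▸ (basisMonomials τ K).linearIndepOn _
  refine LinearIndependent.map (f := (Ideal.Quotient.mkₐ K (spanMonomials g)).toLinearMap)
    hmon ?_
  rw [← Set.image_eq_range (fun e => monomial e (1 : K)), ← restrictSupport_eq_span,
    Submodule.disjoint_def]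
  intro p hstd hI
  rw [mem_restrictSupport_iff] at hstd
  rw [LinearMap.mem_ker, AlgHom.toLinearMap_apply, Ideal.Quotient.mkₐ_eq_mk,
    Ideal.Quotient.eq_zero_iff_mem, mem_spanMonomials_iff] at hI
  by_contra hp
  obtain ⟨e, he⟩ := support_nonempty.mpr hp
  obtain ⟨j, hj⟩ := hI e he
  exact hstd he j hj

lemma map_restrictSupport_eq_span (s : Set (τ →₀ ℕ)) :
    (restrictSupport K s).map (Ideal.Quotient.mkₐ K (spanMonomials (K := K) g)).toLinearMap =
      Submodule.span K ((fun e => Ideal.Quotient.mk (spanMonomials g) (monomial e 1)) ''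
        (s ∩ {e | ∀ j, ¬ g j ≤ e})) := by
  rw [restrictSupport_eq_span, Submodule.map_span, Set.image_image]
  refine le_antisymm (Submodule.span_le.mpr ?_)
    (Submodule.span_mono (Set.image_mono Set.inter_subset_left))
  rintro _ ⟨e, he, rfl⟩
  by_cases hstd : ∀ j, ¬ g j ≤ e
  · exact Submodule.subset_span ⟨e, ⟨he, hstd⟩, rfl⟩
  · push Not at hstd
    have hmem : monomial e (1 : K) ∈ spanMonomials g :=
      (mem_spanMonomials_iff g).mpr fun e' he' => by
        rw [Finset.mem_singleton.mp (support_monomial_subset he')]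
        exact hstd
    simp [Ideal.Quotient.eq_zero_iff_mem.mpr hmem]

end Quotient

section KPolynomial

variable [Fintype τ] {w : τ → (Fin d →₀ ℕ)} {ι : Type*} (g : ι → (τ →₀ ℕ))

lemma mgradedDim_spanMonomials (hw : ∀ i, w i ≠ 0) (a : Fin d →₀ ℕ) :
    mgradedDim w (spanMonomials g) a = #{e ∈ weightFiber w a | ∀ j, ¬ g j ≤ e} := by
  set E : Finset (τ →₀ ℕ) := {e ∈ weightFiber w a | ∀ j, ¬ g j ≤ e}
  have hE : {e | Finsupp.weight w e = a} ∩ {e | ∀ j, ¬ g j ≤ e} = (E : Set (τ →₀ ℕ)) := by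
    ext e
    simp [E, mem_weightFiber hw]
  have hli : LinearIndependent ℂ fun e : (E : Set (τ →₀ ℕ)) =>
      Ideal.Quotient.mk (spanMonomials g) (monomial (e : τ →₀ ℕ) (1 : ℂ)) :=
    (linearIndepOn_mk_monomial g).mono (hE ▸ Set.inter_subset_right)
  rw [mgradedDim, weightedHomogeneousSubmodule_eq_finsupp_supported, ← restrictSupport,
    map_restrictSupport_eq_span, hE, Set.image_eq_range, finrank_span_eq_card hli]
  simp

lemma hilbSeries_spanMonomials (hw : ∀ i, w i ≠ 0) :
    hilbSeries w (spanMonomials g) = standardSeries w g := by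
  ext a
  simp [hilbSeries, standardSeries, MvPowerSeries.coeff_apply, mgradedDim_spanMonomials g hw]

theorem IsKPolynomial.eq_taylorPoly (hw : ∀ i, w i ≠ 0) [Fintype ι] {K : MvPolynomial (Fin d) ℤ}
    (hK : IsKPolynomial w (spanMonomials g) K) : K = taylorPoly w g := by
  apply coe_injective
  calc (K : MvPowerSeries (Fin d) ℤ)
      = taylorPoly w (fun v => Finsupp.single v 1) * (taylorPoly w g * fiberSeries w) := by
        rw [hK, hilbSeries_spanMonomials g hw, prod_one_sub_monomial_eq_taylorPoly,
          taylorPoly_mul_fiberSeries hw]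
    _ = taylorPoly w g * (taylorPoly w (fun v => Finsupp.single v 1) * fiberSeries w) := by
        ring
    _ = taylorPoly w g := by
        rw [taylorPoly_mul_fiberSeries hw, standardSeries_single_eq_one hw, mul_one]

end KPolynomial

section Polarization

variable {N s : ℕ} (g : Fin s → (Fin N →₀ ℕ)) (m : Fin N → ℕ)

lemma polarExpFin_apply (j : Fin s) (v : (i : Fin N) × Fin (m i)) :
    polarExpFin g m j v = if (v.2 : ℕ) < g j v.1 then 1 else 0 := by
  rw [polarExpFin, Finsupp.finsetSum_apply, Finset.sum_eq_single v]
  · split_ifs <;> simp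
  · intro v' _ hv'
    split_ifs <;> simp [hv']
  · simp

lemma finsetSup_polarExpFin_apply (S : Finset (Fin s)) (v : (i : Fin N) × Fin (m i)) :
    S.sup (polarExpFin g m) v = if (v.2 : ℕ) < S.sup g v.1 then 1 else 0 := by
  have hmono : Monotone fun n : ℕ => if (v.2 : ℕ) < n then 1 else 0 := fun a b hab => by
    dsimp only
    split_ifs <;> omega
  rw [finsetSup_apply, finsetSup_apply, Finset.sup_congr rfl fun j _ => polarExpFin_apply g m j v]
  exact (Finset.apply_sup_eq_sup_comp (fun n : ℕ => if (v.2 : ℕ) < n then 1 else 0)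
    (fun _ _ => hmono.map_max) (by simp)).symm

lemma weight_finsetSup_polarExpFin (w : Fin N → (Fin d →₀ ℕ)) (hm : ∀ j i, g j i ≤ m i)
    (S : Finset (Fin s)) :
    Finsupp.weight (fun v : (i : Fin N) × Fin (m i) => w v.1) (S.sup (polarExpFin g m)) =
      Finsupp.weight w (S.sup g) := by
  rw [Finsupp.weight_apply, Finsupp.sum_fintype _ _ (by simp), Fintype.sum_sigma,
    Finsupp.weight_apply, Finsupp.sum_fintype _ _ (by simp)]
  refine Finset.sum_congr rfl fun i _ => ?_
  have hle : S.sup g i ≤ m i := by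
    rw [finsetSup_apply]
    exact Finset.sup_le fun j _ => hm j i
  simp only [finsetSup_polarExpFin_apply, ite_smul, one_smul, zero_smul, Finset.sum_ite,
    Finset.sum_const_zero, add_zero, Finset.sum_const, Fin.card_filter_val_lt, min_eq_right hle]

lemma taylorPoly_polarExpFin (w : Fin N → (Fin d →₀ ℕ)) (hm : ∀ j i, g j i ≤ m i) :
    taylorPoly (fun v : (i : Fin N) × Fin (m i) => w v.1) (polarExpFin g m) = taylorPoly w g := by
  simp only [taylorPoly, weight_finsetSup_polarExpFin g m w hm]

end Polarization

end MonomialIdeal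

theorem polarization_preserves_kpolynomial_general {N s d : ℕ}
    (w : Fin N → (Fin d →₀ ℕ)) (hpos : ∀ i, w i ≠ 0)
    (g : Fin s → (Fin N →₀ ℕ))
    (I : Ideal (MvPolynomial (Fin N) ℂ))
    (hgen : I = Ideal.span (Set.range fun j => MvPolynomial.monomial (g j) (1 : ℂ)))
    (m : Fin N → ℕ) (hm : ∀ i, m i = Finset.univ.sup fun j : Fin s => g j i)
    (Itil : Ideal (MvPolynomial ((i : Fin N) × Fin (m i)) ℂ))
    (hItil : Itil = Ideal.span
      (Set.range fun j => MvPolynomial.monomial (polarExpFin g m j) (1 : ℂ)))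
    (K Ktil : MvPolynomial (Fin d) ℤ)
    (hK : IsKPolynomial w I K)
    (hKtil : IsKPolynomial (fun v : (i : Fin N) × Fin (m i) => w v.1) Itil Ktil) :
    K = Ktil ∧ multidegOf K = multidegOf Ktil := by
  subst hgen hItil
  have hle : ∀ j i, g j i ≤ m i := fun j i =>
    hm i ▸ Finset.le_sup (f := fun j => g j i) (Finset.mem_univ j)
  have hposTil : ∀ v : (i : Fin N) × Fin (m i), w v.1 ≠ 0 := fun v => hpos v.1
  have hKK : K = Ktil := by
    rw [MonomialIdeal.IsKPolynomial.eq_taylorPoly g hpos hK,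
      MonomialIdeal.IsKPolynomial.eq_taylorPoly (polarExpFin g m) hposTil hKtil,
      MonomialIdeal.taylorPoly_polarExpFin g m w hle]
  exact ⟨hKK, congrArg multidegOf hKK⟩

/-- Polarization preserves the multigraded K-polynomial, and in
particular the multidegree. -/
theorem polarization_preserves_kpolynomial {N s d : ℕ}
    (w : Fin N → (Fin d →₀ ℕ)) (hpos : ∀ i, w i ≠ 0)
    (g : Fin s → (Fin N →₀ ℕ))
    (I : Ideal (MvPolynomial (Fin N) ℂ))
    (hgen : I = Ideal.span (Set.range fun j => MvPolynomial.monomial (g j) (1 : ℂ)))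
    (hmin : ∀ j k : Fin s, g j ≤ g k → j = k)
    (m : Fin N → ℕ) (hm : ∀ i, m i = Finset.univ.sup fun j : Fin s => g j i)
    (Itil : Ideal (MvPolynomial ((i : Fin N) × Fin (m i)) ℂ))
    (hItil : Itil = Ideal.span
      (Set.range fun j => MvPolynomial.monomial (polarExpFin g m j) (1 : ℂ)))
    (K Ktil : MvPolynomial (Fin d) ℤ)
    (hK : IsKPolynomial w I K)
    (hKtil : IsKPolynomial (fun v : (i : Fin N) × Fin (m i) => w v.1) Itil Ktil) :
    K = Ktil ∧ multidegOf K = multidegOf Ktil :=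
  polarization_preserves_kpolynomial_general w hpos g I hgen m hm Itil hItil K Ktil hK hKtil
end
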